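/- Let P be a probability measure on ℝ^D with a density π : ℝ^D → (0, ∞) with respect to Lebesgue measure such that log π is differentiable with ∇log π Lipschitz with constant M > 0. Then for every σ > 0, every y ∈ ℝ^D and every unit vector u ∈ ℝ^D, the directional variance of the Gaussian posterior satisfies Var_{ρ_{P,σ,y}}(⟨u,·⟩) ≥ σ²/(1 + Mσ²); equivalently, Var(X | X + σξ = y) ≽ (σ²/(1 + Mσ²)) I_D for (X, ξ) ∼ P ⊗ N(0, I_D). -/

import Mathlib

open MeasureTheory
open scoped RealInnerProductSpace ENNReal

/-- The Gaussian weight `exp(−‖y − x‖²/(2σ²))` defining the Gaussian posterior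
`ρ_{P,σ,y}(dx) ∝ exp(−‖y − x‖²/(2σ²)) P(dx)`. -/
noncomputable def gaussWeight {D : ℕ} (σ : ℝ) (y x : EuclideanSpace ℝ (Fin D)) : ℝ :=
  Real.exp (-‖y - x‖ ^ 2 / (2 * σ ^ 2))

/-- The directional variance `Var_{ρ_{P,σ,y}}(⟨u,·⟩) = ∫⟨u,x⟫² dρ − (∫⟨u,x⟫ dρ)²` of the
Gaussian posterior `ρ_{P,σ,y}`, written via normalized weighted integrals against `P`. -/
noncomputable def dirVar {D : ℕ} (P : Measure (EuclideanSpace ℝ (Fin D))) (σ : ℝ)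
    (y u : EuclideanSpace ℝ (Fin D)) : ℝ :=
  (∫ x, gaussWeight σ y x * ⟪u, x⟫ ^ 2 ∂P) / (∫ x, gaussWeight σ y x ∂P) -
    ((∫ x, gaussWeight σ y x * ⟪u, x⟫ ∂P) / (∫ x, gaussWeight σ y x ∂P)) ^ 2

/-!
The unnormalised posterior density `f x = π x · exp(−‖y − x‖²/(2σ²))` has score
`g = ∂ᵤ log f = ⟪∇ log π, u⟫ + ⟪y − x, u⟫/σ²` along `u`, and `−∂ᵤ g ≤ M + σ⁻²` because `∇ log π`
is `M`-Lipschitz. Differentiating `s ↦ ∫ φ(x) f(x + s u) dx = ∫ φ(x − s u) f(x) dx` at `s = 0`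
gives `∫ g f = 0`, `∫ ⟪u, x⟫ g f = −∫ f` and `∫ g² f ≤ (M + σ⁻²) ∫ f`, the last one without
differentiating `g`. The Cramér–Rao argument, `0 ≤ ∫ (⟪u, x⟫ − m + λ g)² f` with `λ = (M + σ⁻²)⁻¹`,
then bounds the variance below by `(M + σ⁻²)⁻¹ = σ²/(1 + Mσ²)`.

All integrals converge: an integrable density whose log has a Lipschitz gradient grows at most
exponentially, so `f` has Gaussian tails.
-/

open Filter Metric
open scoped NNReal Topology

section Growth

variable {E : Type*} [NormedAddCommGroup E]

def HasExpGrowth (φ : E → ℝ) : Prop :=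
  ∃ C c : ℝ, 0 ≤ C ∧ ∀ x, |φ x| ≤ C * Real.exp (c * ‖x‖)

def HasGaussianTail (F : E → ℝ) : Prop :=
  ∃ K δ : ℝ, 0 ≤ K ∧ 0 < δ ∧ ∀ x, |F x| ≤ K * Real.exp (-δ * ‖x‖ ^ 2)

theorem HasExpGrowth.of_abs_le {φ : E → ℝ} {a b : ℝ} (h : ∀ x, |φ x| ≤ a + b * ‖x‖) :
    HasExpGrowth φ := by
  refine ⟨|a| + |b|, 1, by positivity, fun x => (h x).trans ?_⟩
  have h1 : 1 ≤ Real.exp ‖x‖ := Real.one_le_exp (norm_nonneg x)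
  have h2 : ‖x‖ ≤ Real.exp ‖x‖ := by linarith [Real.add_one_le_exp ‖x‖]
  rw [one_mul, add_mul]
  linarith [le_abs_self a, mul_le_mul_of_nonneg_left h1 (abs_nonneg a),
    mul_le_mul_of_nonneg_right (le_abs_self b) (norm_nonneg x),
    mul_le_mul_of_nonneg_left h2 (abs_nonneg b)]

theorem HasExpGrowth.const (a : ℝ) : HasExpGrowth fun _ : E => a :=
  .of_abs_le (a := |a|) (b := 0) fun _ => by simp

theorem HasExpGrowth.mul {φ ψ : E → ℝ} (hφ : HasExpGrowth φ) (hψ : HasExpGrowth ψ) :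
    HasExpGrowth fun x => φ x * ψ x := by
  obtain ⟨C, c, hC, hφ⟩ := hφ
  obtain ⟨C', c', hC', hψ⟩ := hψ
  refine ⟨C * C', c + c', mul_nonneg hC hC', fun x => ?_⟩
  rw [abs_mul, add_mul, Real.exp_add, mul_mul_mul_comm]
  exact mul_le_mul (hφ x) (hψ x) (abs_nonneg _) (by positivity)

theorem HasExpGrowth.mul_hasGaussianTail {φ F : E → ℝ} (hφ : HasExpGrowth φ)
    (hF : HasGaussianTail F) : HasGaussianTail fun x => φ x * F x := by
  obtain ⟨C, c, hC, hφ⟩ := hφ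
  obtain ⟨K, δ, hK, hδ, hF⟩ := hF
  refine ⟨C * K * Real.exp (c ^ 2 / (2 * δ)), δ / 2, by positivity, by positivity, fun x => ?_⟩
  -- complete the square
  have hsq : c * ‖x‖ + -δ * ‖x‖ ^ 2 ≤ c ^ 2 / (2 * δ) + -(δ / 2) * ‖x‖ ^ 2 := by
    have : 0 ≤ (c - δ * ‖x‖) ^ 2 / (2 * δ) := by positivity
    have e : (c - δ * ‖x‖) ^ 2 / (2 * δ) = c ^ 2 / (2 * δ) - c * ‖x‖ + δ / 2 * ‖x‖ ^ 2 := by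
      field_simp; ring
    linarith
  calc |φ x * F x| ≤ C * Real.exp (c * ‖x‖) * (K * Real.exp (-δ * ‖x‖ ^ 2)) := by
        rw [abs_mul]; exact mul_le_mul (hφ x) (hF x) (abs_nonneg _) (by positivity)
    _ = C * K * Real.exp (c * ‖x‖ + -δ * ‖x‖ ^ 2) := by rw [Real.exp_add]; ring
    _ ≤ C * K * Real.exp (c ^ 2 / (2 * δ) + -(δ / 2) * ‖x‖ ^ 2) := by gcongr
    _ = _ := by rw [Real.exp_add]; ring

theorem HasGaussianTail.exists_bound_comp_add {F : E → ℝ} (hF : HasGaussianTail F) (R : ℝ) :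
    ∃ K δ : ℝ, 0 ≤ K ∧ 0 < δ ∧
      ∀ x c, ‖c‖ ≤ R → |F (x + c)| ≤ K * Real.exp (-δ * ‖x‖ ^ 2) := by
  obtain ⟨K, δ, hK, hδ, hF⟩ := hF
  refine ⟨K * Real.exp (δ * R ^ 2), δ / 2, by positivity, by positivity, fun x c hc => ?_⟩
  have hx : ‖x‖ ≤ ‖x + c‖ + ‖c‖ := by simpa using norm_sub_le (x + c) c
  have h2 : ‖x‖ ^ 2 ≤ 2 * ‖x + c‖ ^ 2 + 2 * R ^ 2 := by
    nlinarith [norm_nonneg c, norm_nonneg x, sq_nonneg (‖x + c‖ - ‖c‖)]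
  have hsq : -δ * ‖x + c‖ ^ 2 ≤ δ * R ^ 2 + -(δ / 2) * ‖x‖ ^ 2 := by
    nlinarith [mul_le_mul_of_nonneg_left h2 hδ.le]
  calc |F (x + c)| ≤ K * Real.exp (-δ * ‖x + c‖ ^ 2) := hF _
    _ ≤ K * Real.exp (δ * R ^ 2 + -(δ / 2) * ‖x‖ ^ 2) := by gcongr
    _ = _ := by rw [Real.exp_add]; ring

theorem HasGaussianTail.comp_add {F : E → ℝ} (hF : HasGaussianTail F) (c : E) :
    HasGaussianTail fun x => F (x + c) := by
  obtain ⟨K, δ, hK, hδ, h⟩ := hF.exists_bound_comp_add ‖c‖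
  exact ⟨K, δ, hK, hδ, fun x => h x c le_rfl⟩

end Growth

theorem hasExpGrowth_inner {E : Type*} [NormedAddCommGroup E] [InnerProductSpace ℝ E] (u : E) :
    HasExpGrowth fun x : E => ⟪u, x⟫ :=
  .of_abs_le (a := 0) (b := ‖u‖) fun x => by simpa using abs_real_inner_le_norm u x

section Integrable

variable {E : Type*} [NormedAddCommGroup E] [InnerProductSpace ℝ E] [FiniteDimensional ℝ E]
  [MeasurableSpace E] [BorelSpace E]

theorem integrable_exp_neg_mul_sq_norm {δ : ℝ} (hδ : 0 < δ) :
    Integrable fun x : E => Real.exp (-δ * ‖x‖ ^ 2) := by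
  refine (GaussianFourier.integrable_cexp_neg_mul_sq_norm_add (V := E) (b := δ)
    (by simpa using hδ) 0 0).re.congr (.of_forall fun x => ?_)
  simp only [inner_zero_left, Complex.ofReal_zero, zero_mul, add_zero, ← Complex.ofReal_pow,
    ← Complex.ofReal_neg, ← Complex.ofReal_mul, RCLike.re_to_complex, Complex.exp_ofReal_re,
    neg_mul]

theorem HasGaussianTail.integrable {F : E → ℝ} (hF : HasGaussianTail F)
    (hm : AEStronglyMeasurable F) : Integrable F := by
  obtain ⟨K, δ, -, hδ, hF⟩ := hF
  exact ((integrable_exp_neg_mul_sq_norm hδ).const_mul K).mono' hm (.of_forall hF)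

theorem integral_mul_comp_add_right (φ f : E → ℝ) (c : E) :
    ∫ x, φ x * f (x + c) = ∫ x, φ (x - c) * f x := by
  rw [← integral_sub_right_eq_self _ c]
  simp only [sub_add_cancel]

end Integrable

section WeightedIntegrals

variable {α : Type*} [MeasurableSpace α] {μ : Measure α}

theorem integral_withDensity_ofReal {p : α → ℝ} (hp : Measurable p) (hp0 : ∀ x, 0 ≤ p x)
    (φ : α → ℝ) :
    ∫ x, φ x ∂μ.withDensity (fun x => ENNReal.ofReal (p x)) = ∫ x, p x * φ x ∂μ := by
  rw [integral_withDensity_eq_integral_toReal_smul hp.ennreal_ofReal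
    (.of_forall fun _ => ENNReal.ofReal_lt_top)]
  simp only [ENNReal.toReal_ofReal (hp0 _), smul_eq_mul]

theorem integral_add_mul_sq_mul {a b w : α → ℝ} (c : ℝ)
    (haa : Integrable (fun x => a x ^ 2 * w x) μ) (hab : Integrable (fun x => a x * b x * w x) μ)
    (hbb : Integrable (fun x => b x ^ 2 * w x) μ) :
    ∫ x, (a x + c * b x) ^ 2 * w x ∂μ =
      ∫ x, a x ^ 2 * w x ∂μ + 2 * c * ∫ x, a x * b x * w x ∂μ + c ^ 2 * ∫ x, b x ^ 2 * w x ∂μ := by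
  have e : (fun x => (a x + c * b x) ^ 2 * w x) = fun x =>
      (a x ^ 2 * w x + 2 * c * (a x * b x * w x)) + c ^ 2 * (b x ^ 2 * w x) := by
    ext x; ring
  rw [e, integral_add (f := fun x => a x ^ 2 * w x + 2 * c * (a x * b x * w x))
      (haa.add (hab.const_mul _)) (hbb.const_mul _),
    integral_add haa (hab.const_mul _), integral_const_mul, integral_const_mul]

theorem integral_sq_mul_div_sub_sq {t w : α → ℝ} (htt : Integrable (fun x => t x ^ 2 * w x) μ)
    (ht : Integrable (fun x => t x * w x) μ) (hw : Integrable w μ) (hZ : ∫ x, w x ∂μ ≠ 0) :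
    (∫ x, t x ^ 2 * w x ∂μ) / (∫ x, w x ∂μ) - ((∫ x, t x * w x ∂μ) / ∫ x, w x ∂μ) ^ 2 =
      (∫ x, (t x - (∫ x, t x * w x ∂μ) / ∫ x, w x ∂μ) ^ 2 * w x ∂μ) / ∫ x, w x ∂μ := by
  set Z := ∫ x, w x ∂μ
  set m := (∫ x, t x * w x ∂μ) / Z
  have hm : ∫ x, t x * w x ∂μ = m * Z := (div_mul_cancel₀ _ hZ).symm
  have h := integral_add_mul_sq_mul (a := t) (b := fun _ => 1) (w := w) (-m) htt
    (by simpa using ht) (by simpa using hw)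
  simp only [mul_one, one_pow, one_mul, ← sub_eq_add_neg] at h
  rw [h, hm]
  field_simp
  ring

/-- The Cramér–Rao inequality, from `0 ≤ ∫ (a + L⁻¹ b)² w`. -/
theorem inv_le_integral_sq_mul_div {a b w : α → ℝ} {L : ℝ} (hw : ∀ x, 0 ≤ w x)
    (haa : Integrable (fun x => a x ^ 2 * w x) μ) (hab : Integrable (fun x => a x * b x * w x) μ)
    (hbb : Integrable (fun x => b x ^ 2 * w x) μ) (hZ : 0 < ∫ x, w x ∂μ)
    (hab_eq : ∫ x, a x * b x * w x ∂μ = -∫ x, w x ∂μ)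
    (hbb_le : ∫ x, b x ^ 2 * w x ∂μ ≤ L * ∫ x, w x ∂μ) :
    L⁻¹ ≤ (∫ x, a x ^ 2 * w x ∂μ) / ∫ x, w x ∂μ := by
  set Z := ∫ x, w x ∂μ
  have hV : 0 ≤ ∫ x, a x ^ 2 * w x ∂μ := integral_nonneg fun x => mul_nonneg (sq_nonneg _) (hw x)
  rcases le_or_gt L 0 with hL | hL
  · exact (inv_nonpos.2 hL).trans (div_nonneg hV hZ.le)
  have hquad : 0 ≤ ∫ x, (a x + L⁻¹ * b x) ^ 2 * w x ∂μ :=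
    integral_nonneg fun x => mul_nonneg (sq_nonneg _) (hw x)
  rw [integral_add_mul_sq_mul L⁻¹ haa hab hbb, hab_eq] at hquad
  have hI : L⁻¹ ^ 2 * ∫ x, b x ^ 2 * w x ∂μ ≤ L⁻¹ * Z :=
    calc L⁻¹ ^ 2 * ∫ x, b x ^ 2 * w x ∂μ ≤ L⁻¹ ^ 2 * (L * Z) := by gcongr
      _ = L⁻¹ * Z := by field_simp
  rw [le_div_iff₀ hZ]
  linarith

end WeightedIntegrals

theorem HasDerivAt.le_of_forall_pos_le_add_mul {Φ : ℝ → ℝ} {d c : ℝ} (hΦ : HasDerivAt Φ d 0)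
    (h : ∀ s, 0 < s → Φ s ≤ Φ 0 + c * s) : d ≤ c := by
  refine le_of_tendsto ((hasDerivWithinAt_iff_tendsto_slope' Set.self_notMem_Ioi).1
    (hΦ.hasDerivWithinAt (s := Set.Ioi 0))) ?_
  filter_upwards [self_mem_nhdsWithin] with s (hs : 0 < s)
  rw [slope_def_field, sub_zero, div_le_iff₀ hs]
  linarith [h s hs]

section Score

variable {E : Type*} [NormedAddCommGroup E] [InnerProductSpace ℝ E] [FiniteDimensional ℝ E]
  [MeasurableSpace E] [BorelSpace E]

structure IsDirectionalScore (f g : E → ℝ) (u : E) : Prop where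
  continuous_density : Continuous f
  continuous_score : Continuous g
  hasGaussianTail : HasGaussianTail f
  hasExpGrowth : HasExpGrowth g
  hasDerivAt : ∀ x (s : ℝ), HasDerivAt (fun s => f (x + s • u)) (g (x + s • u) * f (x + s • u)) s

namespace IsDirectionalScore

variable {f g φ : E → ℝ} {u : E}

theorem integrable_mul_comp_add (hs : IsDirectionalScore f g u) (hφ : Continuous φ)
    (hφ' : HasExpGrowth φ) (c : E) : Integrable fun x => φ x * f (x + c) :=
  (hφ'.mul_hasGaussianTail (hs.hasGaussianTail.comp_add c)).integrable
    (hφ.mul (hs.continuous_density.comp (continuous_add_const c))).aestronglyMeasurable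

theorem integrable_mul (hs : IsDirectionalScore f g u) (hφ : Continuous φ)
    (hφ' : HasExpGrowth φ) : Integrable fun x => φ x * f x := by
  simpa using hs.integrable_mul_comp_add hφ hφ' 0

theorem integrable (hs : IsDirectionalScore f g u) : Integrable f := by
  simpa using hs.integrable_mul continuous_const (.const 1)

theorem integral_pos (hs : IsDirectionalScore f g u) (hpos : ∀ x, 0 < f x) : 0 < ∫ x, f x := by
  refine (integral_pos_iff_support_of_nonneg (fun x => (hpos x).le) hs.integrable).2 ?_
  rw [Function.support_eq_univ fun x => (hpos x).ne']
  exact isOpen_univ.measure_pos volume Set.univ_nonempty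

theorem hasDerivAt_integral (hs : IsDirectionalScore f g u) (hφ : Continuous φ)
    (hφ' : HasExpGrowth φ) :
    HasDerivAt (fun s : ℝ => ∫ x, φ x * f (x + s • u)) (∫ x, φ x * (g x * f x)) 0 := by
  obtain ⟨K, δ, hK, hδ, hbound⟩ :=
    (hs.hasExpGrowth.mul_hasGaussianTail hs.hasGaussianTail).exists_bound_comp_add ‖u‖
  have hf := hs.continuous_density
  have hg := hs.continuous_score
  have hdom : Integrable fun x => |φ x| * (K * Real.exp (-δ * ‖x‖ ^ 2)) := by
    obtain ⟨C, c, hC, hφ'⟩ := hφ'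
    refine HasGaussianTail.integrable ?_ (by fun_prop)
    exact HasExpGrowth.mul_hasGaussianTail ⟨C, c, hC, fun x => by simpa using hφ' x⟩
      ⟨K, δ, hK, hδ, fun x => by rw [abs_of_nonneg (by positivity)]⟩
  have hdom_le : ∀ᵐ x, ∀ s ∈ ball (0 : ℝ) 1,
      ‖φ x * (g (x + s • u) * f (x + s • u))‖ ≤ |φ x| * (K * Real.exp (-δ * ‖x‖ ^ 2)) := by
    refine .of_forall fun x s hs' => ?_
    have hsu : ‖s • u‖ ≤ ‖u‖ := by
      rw [norm_smul]
      exact mul_le_of_le_one_left (norm_nonneg u) (by simpa using (mem_ball_zero_iff.1 hs').le)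
    rw [Real.norm_eq_abs, abs_mul]
    exact mul_le_mul_of_nonneg_left (hbound x _ hsu) (abs_nonneg _)
  simpa only [zero_smul, add_zero] using (hasDerivAt_integral_of_dominated_loc_of_deriv_le
    (F := fun s x => φ x * f (x + s • u)) (F' := fun s x => φ x * (g (x + s • u) * f (x + s • u)))
    (ball_mem_nhds 0 one_pos) (.of_forall fun s => Continuous.aestronglyMeasurable (by fun_prop))
    (by simpa only [zero_smul, add_zero] using hs.integrable_mul hφ hφ')
    (Continuous.aestronglyMeasurable (by fun_prop))
    hdom_le hdom (.of_forall fun x s _ => (hs.hasDerivAt x s).const_mul (φ x))).2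

theorem integral_score_mul (hs : IsDirectionalScore f g u) : ∫ x, g x * f x = 0 := by
  have hΦ := hs.hasDerivAt_integral continuous_const (.const 1)
  simp only [one_mul, integral_add_right_eq_self] at hΦ
  exact hΦ.unique (hasDerivAt_const _ _)

theorem integral_inner_mul_score_mul (hs : IsDirectionalScore f g u) :
    ∫ x, ⟪u, x⟫ * g x * f x = -(‖u‖ ^ 2 * ∫ x, f x) := by
  have hΦ := hs.hasDerivAt_integral (by fun_prop) (hasExpGrowth_inner u)
  have hΦeq : (fun s : ℝ => ∫ x, ⟪u, x⟫ * f (x + s • u)) =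
      fun s => (∫ x, ⟪u, x⟫ * f x) - s * (‖u‖ ^ 2 * ∫ x, f x) := by
    ext s
    calc ∫ x, ⟪u, x⟫ * f (x + s • u) = ∫ x, (⟪u, x⟫ * f x - s * ‖u‖ ^ 2 * f x) := by
          rw [integral_mul_comp_add_right]
          congr 1 with x
          rw [inner_sub_right, real_inner_smul_right, real_inner_self_eq_norm_sq]
          ring
      _ = _ := by
          rw [integral_sub (hs.integrable_mul (by fun_prop) (hasExpGrowth_inner u))
            (hs.integrable.const_mul _), integral_const_mul]
          ring
  rw [hΦeq] at hΦ
  simpa only [mul_assoc] using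
    hΦ.unique ((hasDerivAt_mul_const (‖u‖ ^ 2 * ∫ x, f x)).const_sub (∫ x, ⟪u, x⟫ * f x))

/-- Since `g` need not be differentiable, the Fisher information `∫ g² f = -∫ (∂ᵤ g) f` is
bounded through the translated integral `∫ g(x - s u) f(x) dx`, never differentiating `g`. -/
theorem integral_score_sq_mul_le (hs : IsDirectionalScore f g u) (hf : ∀ x, 0 ≤ f x) {L : ℝ}
    (hL : ∀ x (h : ℝ), 0 ≤ h → g x - g (x + h • u) ≤ L * h) :
    ∫ x, g x ^ 2 * f x ≤ L * ∫ x, f x := by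
  have hΦ := hs.hasDerivAt_integral hs.continuous_score hs.hasExpGrowth
  simp only [← mul_assoc, ← sq] at hΦ
  refine hΦ.le_of_forall_pos_le_add_mul fun s hs' => ?_
  have hgf := hs.integrable_mul hs.continuous_score hs.hasExpGrowth
  have hshift : Integrable fun x => g (x - s • u) * f x := by
    simpa using (hs.integrable_mul_comp_add hs.continuous_score hs.hasExpGrowth
      (s • u)).comp_sub_right (s • u)
  simp only [zero_smul, add_zero]
  rw [integral_mul_comp_add_right]
  calc ∫ x, g (x - s • u) * f x ≤ ∫ x, (g x * f x + L * s * f x) := by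
        refine integral_mono hshift (hgf.add (hs.integrable.const_mul _)) fun x => ?_
        have := hL (x - s • u) s hs'.le
        rw [sub_add_cancel] at this
        nlinarith [hf x]
    _ = (∫ x, g x * f x) + L * (∫ x, f x) * s := by
        rw [integral_add hgf (hs.integrable.const_mul _), integral_const_mul]; ring

theorem inv_le_variance (hs : IsDirectionalScore f g u) (hpos : ∀ x, 0 < f x) (hu : ‖u‖ = 1)
    {L : ℝ} (hL : ∀ x (h : ℝ), 0 ≤ h → g x - g (x + h • u) ≤ L * h) :
    L⁻¹ ≤ (∫ x, ⟪u, x⟫ ^ 2 * f x) / (∫ x, f x) - ((∫ x, ⟪u, x⟫ * f x) / ∫ x, f x) ^ 2 := by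
  have hZ := hs.integral_pos hpos
  have hg := hs.continuous_score
  have hg' := hs.hasExpGrowth
  have ht := hasExpGrowth_inner u
  rw [integral_sq_mul_div_sub_sq
    (hs.integrable_mul (by fun_prop) (by simpa only [sq] using ht.mul ht))
    (hs.integrable_mul (by fun_prop) ht) hs.integrable hZ.ne']
  set m := (∫ x, ⟪u, x⟫ * f x) / ∫ x, f x
  have ha : HasExpGrowth fun x => ⟪u, x⟫ - m := .of_abs_le (a := |m|) (b := ‖u‖) fun x =>
    (abs_sub _ _).trans (by linarith [abs_real_inner_le_norm u x])
  have hcov : ∫ x, (⟪u, x⟫ - m) * g x * f x = -∫ x, f x := by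
    simp only [sub_mul]
    rw [integral_sub (hs.integrable_mul (by fun_prop) (ht.mul hg'))
      (by simpa only [mul_assoc] using (hs.integrable_mul hg hg').const_mul m),
      hs.integral_inner_mul_score_mul]
    simp only [mul_assoc, integral_const_mul]
    rw [hs.integral_score_mul, hu]
    ring
  exact inv_le_integral_sq_mul_div (fun x => (hpos x).le)
    (hs.integrable_mul (by fun_prop) (by simpa only [sq] using ha.mul ha))
    (hs.integrable_mul (by fun_prop) (ha.mul hg'))
    (hs.integrable_mul (by fun_prop) (by simpa only [sq] using hg'.mul hg')) hZ hcov
    (hs.integral_score_sq_mul_le (fun x => (hpos x).le) hL)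

end IsDirectionalScore

end Score

section LogDensity

variable {E : Type*} [NormedAddCommGroup E] [InnerProductSpace ℝ E]

theorem continuous_of_differentiable_log {p : E → ℝ} (hp : ∀ x, 0 < p x)
    (hdiff : Differentiable ℝ fun x => Real.log (p x)) : Continuous p :=
  (Real.continuous_exp.comp hdiff.continuous).congr fun x => Real.exp_log (hp x)

variable [CompleteSpace E]

theorem hasDerivAt_comp_add_smul_of_differentiable {ℓ : E → ℝ} (hℓ : Differentiable ℝ ℓ)
    (x u : E) (s : ℝ) :
    HasDerivAt (fun s : ℝ => ℓ (x + s • u)) ⟪gradient ℓ (x + s • u), u⟫ s := by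
  have hline : HasDerivAt (fun s : ℝ => x + s • u) u s := by
    simpa using ((hasDerivAt_id s).smul_const u).const_add x
  rw [inner_gradient_left]
  exact (hℓ _).hasFDerivAt.comp_hasDerivAt s hline

theorem sub_le_of_lipschitzWith_gradient {ℓ : E → ℝ} {K : ℝ≥0} (hℓ : Differentiable ℝ ℓ)
    (hlip : LipschitzWith K (gradient ℓ)) {x ξ : E} (hξ : ξ ∈ closedBall x 1) :
    ℓ x - ℓ ξ ≤ ‖gradient ℓ 0‖ + K * (‖x‖ + 1) := by
  have hbound : ∀ ζ ∈ closedBall x 1, ‖fderiv ℝ ℓ ζ‖ ≤ ‖gradient ℓ 0‖ + K * (‖x‖ + 1) := by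
    intro ζ hζ
    have hζx : ‖ζ‖ ≤ ‖x‖ + 1 := by
      linarith [norm_le_norm_add_norm_sub' ζ x, mem_closedBall_iff_norm.1 hζ]
    have hG : ‖gradient ℓ ζ - gradient ℓ 0‖ ≤ K * ‖ζ‖ := by
      simpa [dist_eq_norm] using hlip.dist_le_mul ζ 0
    rw [← (InnerProductSpace.toDual ℝ E).symm.norm_map]
    change ‖gradient ℓ ζ‖ ≤ _
    calc ‖gradient ℓ ζ‖ ≤ ‖gradient ℓ 0‖ + ‖gradient ℓ ζ - gradient ℓ 0‖ :=
          norm_le_insert' _ _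
      _ ≤ ‖gradient ℓ 0‖ + K * (‖x‖ + 1) := by gcongr; exact hG.trans (by gcongr)
  have hmvt := (convex_closedBall x 1).norm_image_sub_le_of_norm_fderiv_le (fun ζ _ => hℓ ζ)
    hbound hξ (mem_closedBall_self zero_le_one)
  have hxξ : ‖x - ξ‖ ≤ 1 := by rw [norm_sub_rev]; exact mem_closedBall_iff_norm.1 hξ
  calc ℓ x - ℓ ξ ≤ ‖ℓ x - ℓ ξ‖ := Real.le_norm_self _
    _ ≤ (‖gradient ℓ 0‖ + K * (‖x‖ + 1)) * ‖x - ξ‖ := hmvt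
    _ ≤ ‖gradient ℓ 0‖ + K * (‖x‖ + 1) := mul_le_of_le_one_right (by positivity) hxξ

/-- An integrable density cannot be much larger at `x` than on the unit ball around `x`, where
its logarithm varies by at most a linear function of `‖x‖`. -/
theorem hasExpGrowth_of_lipschitzWith_gradient_log [FiniteDimensional ℝ E] [MeasurableSpace E]
    [BorelSpace E] (μ : Measure E) [μ.IsAddHaarMeasure] {p : E → ℝ} {K : ℝ≥0}
    (hp : ∀ x, 0 < p x) (hdiff : Differentiable ℝ fun x => Real.log (p x))
    (hlip : LipschitzWith K (gradient fun x => Real.log (p x))) (hint : Integrable p μ) :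
    HasExpGrowth p := by
  set A := ‖gradient (fun x => Real.log (p x)) 0‖ + K
  set b := μ.real (closedBall 0 1)
  have hb : 0 < b := ENNReal.toReal_pos (measure_closedBall_pos μ 0 one_pos).ne'
    measure_closedBall_lt_top.ne
  refine ⟨(∫ x, p x ∂μ) / b * Real.exp A, K,
    mul_nonneg (div_nonneg (integral_nonneg fun x => (hp x).le) hb.le) (Real.exp_pos _).le,
    fun x => ?_⟩
  set c := p x * Real.exp (-(A + K * ‖x‖))
  have hc : ∀ ξ ∈ closedBall x 1, c ≤ p ξ := by
    intro ξ hξ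
    have h := sub_le_of_lipschitzWith_gradient hdiff hlip hξ
    rw [← Real.log_le_log_iff (mul_pos (hp x) (Real.exp_pos _)) (hp ξ),
      Real.log_mul (hp x).ne' (by positivity), Real.log_exp]
    linarith
  have hcb : c * b ≤ ∫ x, p x ∂μ :=
    calc c * b = ∫ _ in closedBall x 1, c ∂μ := by
          rw [setIntegral_const, smul_eq_mul, mul_comm, Measure.real,
            Measure.addHaar_closedBall_center]
          rfl
      _ ≤ ∫ ξ in closedBall x 1, p ξ ∂μ :=
          setIntegral_mono_on (integrableOn_const measure_closedBall_lt_top.ne)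
            hint.integrableOn measurableSet_closedBall hc
      _ ≤ ∫ ξ, p ξ ∂μ := setIntegral_le_integral hint (.of_forall fun ξ => (hp ξ).le)
  rw [abs_of_pos (hp x), mul_assoc, ← Real.exp_add]
  calc p x = c * Real.exp (A + K * ‖x‖) := by
        rw [mul_assoc, ← Real.exp_add, neg_add_cancel, Real.exp_zero, mul_one]
    _ ≤ (∫ x, p x ∂μ) / b * Real.exp (A + K * ‖x‖) := by gcongr; rwa [le_div_iff₀ hb]

end LogDensity

section PosteriorScore

variable {E : Type*} [NormedAddCommGroup E] [InnerProductSpace ℝ E] [CompleteSpace E]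

noncomputable def posteriorScore (p : E → ℝ) (σ : ℝ) (y u x : E) : ℝ :=
  ⟪gradient (fun x => Real.log (p x)) x, u⟫ + ⟪y - x, u⟫ / σ ^ 2

variable {p : E → ℝ} {K : ℝ≥0} {σ : ℝ} {y u : E}

theorem continuous_posteriorScore
    (hlip : LipschitzWith K (gradient fun x => Real.log (p x))) :
    Continuous (posteriorScore p σ y u) := by
  have := hlip.continuous
  unfold posteriorScore
  fun_prop

theorem hasExpGrowth_posteriorScore
    (hlip : LipschitzWith K (gradient fun x => Real.log (p x))) :
    HasExpGrowth (posteriorScore p σ y u) := by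
  set G := gradient fun x => Real.log (p x)
  refine .of_abs_le (a := (‖G 0‖ + ‖y‖ / σ ^ 2) * ‖u‖) (b := (K + 1 / σ ^ 2) * ‖u‖) fun x => ?_
  have hG : ‖G x‖ ≤ ‖G 0‖ + K * ‖x‖ := by
    have := hlip.dist_le_mul x 0
    rw [dist_eq_norm, dist_eq_norm, sub_zero] at this
    linarith [norm_le_insert' (G x) (G 0)]
  have hy : ‖y - x‖ / σ ^ 2 ≤ (‖y‖ + ‖x‖) / σ ^ 2 := by gcongr; exact norm_sub_le y x
  calc |posteriorScore p σ y u x| ≤ |⟪G x, u⟫| + |⟪y - x, u⟫| / σ ^ 2 := by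
        rw [posteriorScore, ← abs_of_nonneg (sq_nonneg σ), ← abs_div, abs_of_nonneg (sq_nonneg σ)]
        exact abs_add_le _ _
    _ ≤ ‖G x‖ * ‖u‖ + ‖y - x‖ * ‖u‖ / σ ^ 2 := by
        gcongr <;> exact abs_real_inner_le_norm _ _
    _ ≤ (‖G 0‖ + K * ‖x‖) * ‖u‖ + (‖y‖ + ‖x‖) / σ ^ 2 * ‖u‖ := by
        rw [mul_div_right_comm]; gcongr
    _ = _ := by ring

theorem posteriorScore_sub_le (hlip : LipschitzWith K (gradient fun x => Real.log (p x)))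
    (hu : ‖u‖ = 1) (x : E) {h : ℝ} (hh : 0 ≤ h) :
    posteriorScore p σ y u x - posteriorScore p σ y u (x + h • u) ≤ (K + (σ ^ 2)⁻¹) * h := by
  set G := gradient fun x => Real.log (p x)
  have hG : ⟪G x - G (x + h • u), u⟫ ≤ K * h := by
    have := hlip.dist_le_mul x (x + h • u)
    rw [dist_eq_norm, dist_eq_norm, sub_add_cancel_left, norm_neg, norm_smul, hu,
      Real.norm_of_nonneg hh, mul_one] at this
    exact (real_inner_le_norm _ _).trans (by rw [hu, mul_one]; exact this)
  have hy : ⟪y - x, u⟫ - ⟪y - (x + h • u), u⟫ = h := by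
    rw [← inner_sub_left, show y - x - (y - (x + h • u)) = h • u by abel, real_inner_smul_left,
      real_inner_self_eq_norm_sq, hu, one_pow, mul_one]
  calc posteriorScore p σ y u x - posteriorScore p σ y u (x + h • u)
      = ⟪G x - G (x + h • u), u⟫ + (⟪y - x, u⟫ - ⟪y - (x + h • u), u⟫) / σ ^ 2 := by
        simp only [posteriorScore, G, inner_sub_left]; ring
    _ ≤ (K + (σ ^ 2)⁻¹) * h := by rw [hy, add_mul, div_eq_inv_mul]; linarith

end PosteriorScore

section GaussianPosterior

variable {D : ℕ}

theorem hasGaussianTail_gaussWeight {σ : ℝ} (hσ : σ ≠ 0) (y : EuclideanSpace ℝ (Fin D)) :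
    HasGaussianTail (gaussWeight σ y) := by
  have h0 : HasGaussianTail fun z : EuclideanSpace ℝ (Fin D) => Real.exp (-‖z‖ ^ 2 / (2 * σ ^ 2)) :=
    ⟨1, 1 / (2 * σ ^ 2), zero_le_one, by positivity, fun z => by
      rw [abs_of_pos (Real.exp_pos _), one_mul]; ring_nf; rfl⟩
  convert h0.comp_add (-y) using 2 with x
  rw [gaussWeight, ← sub_eq_add_neg, norm_sub_rev]

theorem hasDerivAt_gaussWeight_comp_add_smul (σ : ℝ) (y x u : EuclideanSpace ℝ (Fin D)) (s : ℝ) :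
    HasDerivAt (fun s : ℝ => gaussWeight σ y (x + s • u))
      (⟪y - (x + s • u), u⟫ / σ ^ 2 * gaussWeight σ y (x + s • u)) s := by
  have hline : HasDerivAt (fun s : ℝ => y - (x + s • u)) (-u) s := by
    simpa using (((hasDerivAt_id s).smul_const u).const_add x).const_sub y
  refine (hline.norm_sq.neg.div_const (2 * σ ^ 2)).exp.congr_deriv ?_
  simp only [Pi.neg_apply, gaussWeight, inner_neg_right]
  ring

theorem isDirectionalScore_posterior {p : EuclideanSpace ℝ (Fin D) → ℝ} {K : ℝ≥0} {σ : ℝ}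
    (hσ : σ ≠ 0) (hp : ∀ x, 0 < p x) (hgrowth : HasExpGrowth p)
    (hdiff : Differentiable ℝ fun x => Real.log (p x))
    (hlip : LipschitzWith K (gradient fun x => Real.log (p x))) (y u : EuclideanSpace ℝ (Fin D)) :
    IsDirectionalScore (fun x => p x * gaussWeight σ y x) (posteriorScore p σ y u) u where
  continuous_density := by
    have := continuous_of_differentiable_log hp hdiff
    unfold gaussWeight
    fun_prop
  continuous_score := continuous_posteriorScore hlip
  hasGaussianTail := hgrowth.mul_hasGaussianTail (hasGaussianTail_gaussWeight hσ y)
  hasExpGrowth := hasExpGrowth_posteriorScore hlip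
  hasDerivAt x s := by
    have hlog := hasDerivAt_comp_add_smul_of_differentiable hdiff x u s
    have hp' := hlog.exp
    simp only [Real.exp_log (hp _)] at hp'
    refine (hp'.mul (hasDerivAt_gaussWeight_comp_add_smul σ y x u s)).congr_deriv ?_
    simp only [posteriorScore]
    ring

end GaussianPosterior

/-- If `P` has an everywhere positive density `π` with respect to Lebesgue measure such that
`log π` is differentiable with `M`-Lipschitz gradient, then
`Var(X | X + σξ = y) ≽ (σ²/(1 + Mσ²)) I_D`: for all `σ > 0`, `y` and unit vectors `u`,
the directional posterior variance is at least `σ²/(1 + Mσ²)`. -/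
theorem posterior_variance_ge_of_lipschitz_score {D : ℕ}
    (P : Measure (EuclideanSpace ℝ (Fin D))) [IsProbabilityMeasure P]
    (π : EuclideanSpace ℝ (Fin D) → ℝ) (M : ℝ) (hM : 0 < M)
    (hπpos : ∀ x, 0 < π x)
    (hP : P = volume.withDensity (fun x => ENNReal.ofReal (π x)))
    (hdiff : Differentiable ℝ (fun x : EuclideanSpace ℝ (Fin D) => Real.log (π x)))
    (hlip : LipschitzWith (Real.toNNReal M)
      (gradient (fun x : EuclideanSpace ℝ (Fin D) => Real.log (π x)))) :
    ∀ σ > 0, ∀ y u : EuclideanSpace ℝ (Fin D), ‖u‖ = 1 →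
      σ ^ 2 / (1 + M * σ ^ 2) ≤ dirVar P σ y u := by
  intro σ hσ y u hu
  have hπ := continuous_of_differentiable_log hπpos hdiff
  have hint : Integrable π := by
    refine ⟨hπ.aestronglyMeasurable,
      (hasFiniteIntegral_iff_ofReal (.of_forall fun x => (hπpos x).le)).2 ?_⟩
    rw [← setLIntegral_univ, ← withDensity_apply _ MeasurableSet.univ, ← hP]
    exact measure_lt_top P _
  have hs := isDirectionalScore_posterior hσ.ne' hπpos
    (hasExpGrowth_of_lipschitzWith_gradient_log volume hπpos hdiff hlip hint) hdiff hlip y u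
  have hvar := hs.inv_le_variance (fun x => mul_pos (hπpos x) (Real.exp_pos _)) hu
    (fun x h hh => posteriorScore_sub_le hlip hu x hh)
  rw [Real.coe_toNNReal M hM.le] at hvar
  convert hvar using 1
  · field_simp
    ring
  · simp only [dirVar, hP, integral_withDensity_ofReal hπ.measurable fun x => (hπpos x).le,
      mul_left_comm (π _), mul_comm (gaussWeight σ y _)]
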